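/- There is no nonempty open set U ⊆ ℝ² together with a C¹ immersion F : U → ℝ³ (that is, the derivative DF(u) : ℝ² → ℝ³ is injective at every u ∈ U) such that for every u ∈ U and every w ∈ ℝ², α_{F(u)}(DF(u)w) = 0. In other words, there is no C¹ surface in ℝ³ which is everywhere tangent to the 2-plane field ξ = ker α. -/

import Mathlib

/-- The standard contact form on ℝ³: `α_p(v) = p₁v₂ − p₂v₁ + v₃`. -/
noncomputable def alpha (p v : Fin 3 → ℝ) : ℝ := p 0 * v 1 - p 1 * v 0 + v 2

/-!
Near a point of a C¹ surface tangent to `ξ = ker α`, the projection to the `(x, y)`-plane is a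
local diffeomorphism: a vertical tangent vector `v` would satisfy `α(v) = v₃ = 0`. So the surface is
locally a graph `z = H(x, y)`, and tangency to `ξ` says `dH = y dx - x dy`. This 1-form is not
closed, contradicting the symmetry of the second derivative of `H`.
-/

open Filter Topology ContinuousLinearMap

noncomputable def projXY : (Fin 3 → ℝ) →L[ℝ] (Fin 2 → ℝ) :=
  pi fun i => proj i.castSucc

@[simp]
theorem projXY_apply (p : Fin 3 → ℝ) (i : Fin 2) : projXY p i = p i.castSucc := rfl

theorem alpha_eq_zero_iff (p v : Fin 3 → ℝ) : alpha p v = 0 ↔ v 2 = p 1 * v 0 - p 0 * v 1 := by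
  rw [alpha]
  constructor <;> intro h <;> linarith

/-- `ξ_p` contains no nonzero vertical vector. -/
theorem injective_projXY_comp {E : Type*} [AddCommGroup E] [Module ℝ E] [TopologicalSpace E]
    {T : E →L[ℝ] Fin 3 → ℝ} {p : Fin 3 → ℝ} (hT : Function.Injective T)
    (hξ : ∀ w, alpha p (T w) = 0) : Function.Injective (projXY ∘L T) := by
  refine (injective_iff_map_eq_zero _).2 fun w hw => (injective_iff_map_eq_zero T).1 hT w ?_
  have h0 : T w 0 = 0 := by simpa using congrFun hw 0
  have h1 : T w 1 = 0 := by simpa using congrFun hw 1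
  have h2 : T w 2 = 0 := by rw [(alpha_eq_zero_iff _ _).1 (hξ w), h0, h1]; ring
  funext i
  fin_cases i <;> assumption

noncomputable def planarContactForm : (Fin 2 → ℝ) →L[ℝ] (Fin 2 → ℝ) →L[ℝ] ℝ :=
  (proj 1 : (Fin 2 → ℝ) →L[ℝ] ℝ).smulRight (proj 0 : (Fin 2 → ℝ) →L[ℝ] ℝ) -
    (proj 0 : (Fin 2 → ℝ) →L[ℝ] ℝ).smulRight (proj 1 : (Fin 2 → ℝ) →L[ℝ] ℝ)

@[simp]
theorem planarContactForm_apply (v w : Fin 2 → ℝ) :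
    planarContactForm v w = v 1 * w 0 - v 0 * w 1 := by
  simp [planarContactForm]

/-- `d(y dx - x dy) = -2 dx ∧ dy ≠ 0`, against the symmetry of second derivatives. -/
theorem not_eventually_hasFDerivAt_planarContactForm (H : (Fin 2 → ℝ) → ℝ) (v₀ : Fin 2 → ℝ) :
    ¬ ∀ᶠ v in 𝓝 v₀, HasFDerivAt H (planarContactForm v) v := by
  intro hH
  have hsymm := second_derivative_symmetric_of_eventually hH planarContactForm.hasFDerivAt
    ![1, 0] ![0, 1]
  norm_num at hsymm

theorem hasFDerivAt_height_of_section {G : (Fin 2 → ℝ) → Fin 3 → ℝ}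
    {G' : (Fin 2 → ℝ) →L[ℝ] Fin 3 → ℝ} {v : Fin 2 → ℝ} (hG : HasFDerivAt G G' v)
    (hsec : ∀ᶠ x in 𝓝 v, projXY (G x) = x) (hξ : ∀ w, alpha (G v) (G' w) = 0) :
    HasFDerivAt (fun x => G x 2) (planarContactForm v) v := by
  have hG' : projXY ∘L G' = .id ℝ _ :=
    (projXY.hasFDerivAt.comp v hG).unique ((hasFDerivAt_id v).congr_of_eventuallyEq hsec)
  have hGv := hsec.self_of_nhds
  refine (hasFDerivAt_pi'.1 hG 2).congr_fderiv ?_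
  ext w
  have hw := congrArg (· w) hG'
  simp only [comp_apply, id_apply] at hw
  have h0 : G' w 0 = w 0 := by simpa using congrFun hw 0
  have h1 : G' w 1 = w 1 := by simpa using congrFun hw 1
  have hv0 : G v 0 = v 0 := by simpa using congrFun hGv 0
  have hv1 : G v 1 = v 1 := by simpa using congrFun hGv 1
  simp [(alpha_eq_zero_iff _ _).1 (hξ w), h0, h1, hv0, hv1]

theorem ContDiffAt.exists_rightInverse_of_injective {E : Type*} [NormedAddCommGroup E]
    [NormedSpace ℝ E] [FiniteDimensional ℝ E] {Φ : E → E} {u₀ : E} (hΦ : ContDiffAt ℝ 1 Φ u₀)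
    (hinj : Function.Injective (fderiv ℝ Φ u₀)) :
    ∃ N : E → E, Tendsto N (𝓝 (Φ u₀)) (𝓝 u₀) ∧
      ∀ᶠ v in 𝓝 (Φ u₀), Φ (N v) = v ∧ DifferentiableAt ℝ N v := by
  let A : E ≃L[ℝ] E :=
    (LinearEquiv.ofInjectiveEndo (fderiv ℝ Φ u₀ : E →ₗ[ℝ] E) hinj).toContinuousLinearEquiv
  have hA : HasFDerivAt Φ (A : E →L[ℝ] E) u₀ := (hΦ.differentiableAt one_ne_zero).hasFDerivAt
  refine ⟨hΦ.localInverse hA one_ne_zero,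
    (hΦ.hasStrictFDerivAt' hA one_ne_zero).localInverse_tendsto,
    (hΦ.hasStrictFDerivAt' hA one_ne_zero).eventually_right_inverse.and ?_⟩
  exact ((hΦ.to_localInverse hA one_ne_zero).eventually (by simp)).mono
    fun v hv => hv.differentiableAt one_ne_zero

/-- There is no nonempty open set `U ⊆ ℝ²` together with a C¹ immersion `F : U → ℝ³`
(the derivative `DF(u)` is injective for every `u ∈ U`) whose image is everywhere tangent to
the standard contact plane field `ξ = ker α`, i.e. with `α_{F(u)}(DF(u)w) = 0` for all
`u ∈ U` and `w ∈ ℝ²`. -/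
theorem no_integral_surface :
    ¬ ∃ (U : Set (Fin 2 → ℝ)) (F : (Fin 2 → ℝ) → (Fin 3 → ℝ)),
        U.Nonempty ∧ IsOpen U ∧ ContDiffOn ℝ 1 F U ∧
        (∀ u ∈ U, Function.Injective (fderiv ℝ F u)) ∧
        (∀ u ∈ U, ∀ w : Fin 2 → ℝ, alpha (F u) (fderiv ℝ F u w) = 0) := by
  rintro ⟨U, F, ⟨u₀, hu₀⟩, hU, hF, hinj, hξ⟩
  have hFU : ∀ u ∈ U, HasFDerivAt F (fderiv ℝ F u) u := fun u hu =>
    ((hF.differentiableOn one_ne_zero).differentiableAt (hU.mem_nhds hu)).hasFDerivAt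
  have hΦ : ContDiffAt ℝ 1 (projXY ∘ F) u₀ :=
    (projXY.contDiff.comp_contDiffOn hF).contDiffAt (hU.mem_nhds hu₀)
  have hΦ' : fderiv ℝ (projXY ∘ F) u₀ = projXY ∘L fderiv ℝ F u₀ :=
    (projXY.hasFDerivAt.comp u₀ (hFU u₀ hu₀)).fderiv
  obtain ⟨N, hN, hsec⟩ := hΦ.exists_rightInverse_of_injective <| by
    rw [hΦ']
    exact injective_projXY_comp (hinj u₀ hu₀) (hξ u₀ hu₀)
  refine not_eventually_hasFDerivAt_planarContactForm (fun v => F (N v) 2) (projXY (F u₀)) ?_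
  filter_upwards [hsec.eventually_nhds, hN (hU.mem_nhds hu₀)] with v hv hNv
  exact hasFDerivAt_height_of_section ((hFU _ hNv).comp v hv.self_of_nhds.2.hasFDerivAt)
    (hv.mono fun x hx => hx.1) fun w => hξ _ hNv _
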